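/- arXiv:1504.02268 — 7 statements merged into one kernel-verified Lean document; each statement's English description precedes it below -/
import Mathlib

section
/- Let G = (V,E) be a finite simple graph with n nodes, fix α ≥ 1, d ≥ 0, ε ∈ (0,1), and L = 2 + ⌈log_{1+ε} n⌉. Let (Z_1, …, Z_L) be an (α, d, L)-decomposition of G. If d > 2(1+ε)·d*, where d* = max_{∅≠S⊆V} |E(S)|/|S|, then Z_L = ∅. -/
open Finset
open scoped Classical

variable {V : Type*} [Fintype V] [DecidableEq V]

/-- Degree of `v` within the node set `S`: number of neighbors of `v` inside `S`. -/
noncomputable def degIn (G : SimpleGraph V) (v : V) (S : Finset V) : ℕ :=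
  (S.filter fun u => G.Adj v u).card

/-- The set of edges of `G` with both endpoints in `S`. -/
noncomputable def edgesIn (G : SimpleGraph V) (S : Finset V) : Finset (Sym2 V) :=
  G.edgeFinset.filter fun e => ∀ v ∈ e, v ∈ S

/-- Density of the subgraph induced by `S`: `|E(S)|/|S|`. -/
noncomputable def density (G : SimpleGraph V) (S : Finset V) : ℝ :=
  (edgesIn G S).card / S.card

/-- An `(α, d, L)`-decomposition of `G`: a chain `V = Z 1 ⊇ Z 2 ⊇ ⋯ ⊇ Z L` such that
every node of `Z i` with degree `> α d` inside `Z i` is included in `Z (i+1)`, and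
no node of `Z i` with degree `< d` inside `Z i` belongs to `Z (i+1)`. -/
def IsDecomp (G : SimpleGraph V) (α d : ℝ) (L : ℕ) (Z : ℕ → Finset V) : Prop :=
  Z 1 = Finset.univ ∧
  (∀ i, 1 ≤ i → i < L → Z (i + 1) ⊆ Z i) ∧
  (∀ i, 1 ≤ i → i < L → ∀ v ∈ Z i, α * d < (degIn G v (Z i) : ℝ) → v ∈ Z (i + 1)) ∧
  (∀ i, 1 ≤ i → i < L → ∀ v ∈ Z i, (degIn G v (Z i) : ℝ) < d → v ∉ Z (i + 1))

/-! Every node of `Z (i + 1)` has at least `d` neighbours in `Z i`, so by the handshake lemma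
`d |Z (i + 1)| ≤ 2 |E(Z i)| ≤ 2 d* |Z i|`. As `d > 2 (1 + ε) d*`, each level is smaller than
the previous one by a factor `1 + ε`. Starting from `|Z 1| = n`, a nonempty `Z L` would therefore
give `(1 + ε) ^ (L - 1) ≤ n`, whereas `L - 1 = ⌈log_{1+ε} n⌉ + 1`. -/

section Density

variable (G : SimpleGraph V)

lemma sum_degIn_eq_two_mul_card_edgesIn (S : Finset V) :
    ∑ v ∈ S, degIn G v S = 2 * #(edgesIn G S) := by
  set H := ((⊤ : G.Subgraph).induce (S : Set V)).spanningCoe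
  have hdeg : ∀ v ∈ S, H.degree v = degIn G v S := fun v hv => by
    rw [← SimpleGraph.card_neighborFinset_eq_degree, degIn]
    congr 1; ext u; simp [H, hv]
  have hdeg0 : ∀ v ∉ S, H.degree v = 0 := fun v hv => by
    rw [← SimpleGraph.card_neighborFinset_eq_degree, card_eq_zero]
    ext u; simp [H, hv]
  have hedges : H.edgeFinset = edgesIn G S := by
    ext e
    induction e using Sym2.ind with
    | _ a b => simp [H, edgesIn, and_comm, and_assoc]
  rw [← hedges, ← SimpleGraph.sum_degrees_eq_twice_card_edges,
    ← sum_subset (subset_univ S) fun v _ hv => hdeg0 v hv]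
  exact sum_congr rfl fun v hv => (hdeg v hv).symm

lemma mul_card_le_two_mul_card_edgesIn {S T : Finset V} {d : ℝ} (hTS : T ⊆ S)
    (hdeg : ∀ v ∈ T, d ≤ degIn G v S) : d * #T ≤ 2 * #(edgesIn G S) := by
  calc d * #T = ∑ _v ∈ T, d := by rw [sum_const, nsmul_eq_mul, mul_comm]
    _ ≤ ∑ v ∈ T, (degIn G v S : ℝ) := sum_le_sum hdeg
    _ ≤ ∑ v ∈ S, (degIn G v S : ℝ) :=
        sum_le_sum_of_subset_of_nonneg hTS fun _ _ _ => by positivity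
    _ = 2 * #(edgesIn G S) := mod_cast sum_degIn_eq_two_mul_card_edgesIn G S

lemma edgesIn_empty : edgesIn G ∅ = ∅ :=
  filter_false_of_mem fun e _ he => by
    induction e using Sym2.ind with
    | _ a _ => exact notMem_empty a (he a (Sym2.mem_mk_left _ _))

lemma density_nonneg (S : Finset V) : 0 ≤ density G S := by
  unfold density; positivity

lemma card_edgesIn_le_of_density_le {D : ℝ}
    (hD : ∀ S : Finset V, S.Nonempty → density G S ≤ D) (S : Finset V) :
    (#(edgesIn G S) : ℝ) ≤ D * #S := by
  rcases S.eq_empty_or_nonempty with rfl | hS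
  · simp [edgesIn_empty]
  · have hpos : (0 : ℝ) < #S := mod_cast hS.card_pos
    have := hD S hS
    rwa [density, div_le_iff₀ hpos] at this

end Density

lemma pow_mul_le_of_mul_succ_le {f : ℕ → ℝ} {r : ℝ} (hr : 0 ≤ r) {a k : ℕ}
    (hf : ∀ i, a ≤ i → i < a + k → r * f (i + 1) ≤ f i) : r ^ k * f (a + k) ≤ f a := by
  induction k with
  | zero => simp
  | succ k ih =>
    calc r ^ (k + 1) * f (a + (k + 1)) = r ^ k * (r * f (a + k + 1)) := by ring_nf
      _ ≤ r ^ k * f (a + k) := by gcongr; exact hf (a + k) (by omega) (by omega)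
      _ ≤ f a := ih fun i h1 h2 => hf i h1 (by omega)

lemma lt_pow_natCeil_logb_succ {b x : ℝ} (hb : 1 < b) (hx : 0 < x) :
    x < b ^ (⌈Real.logb b x⌉₊ + 1) := by
  have hle : x ≤ b ^ ⌈Real.logb b x⌉₊ := by
    rw [← Real.rpow_natCast, ← Real.logb_le_iff_le_rpow hb hx]
    exact Nat.le_ceil _
  rw [pow_succ]
  nlinarith [pow_pos (zero_lt_one.trans hb) ⌈Real.logb b x⌉₊]

namespace IsDecomp

variable {G : SimpleGraph V} {α d : ℝ} {L : ℕ} {Z : ℕ → Finset V}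

lemma mul_card_succ_le_two_mul_card_edgesIn (hZ : IsDecomp G α d L Z) {i : ℕ} (h1 : 1 ≤ i)
    (hL : i < L) :
    d * #(Z (i + 1)) ≤ 2 * #(edgesIn G (Z i)) :=
  mul_card_le_two_mul_card_edgesIn G (hZ.2.1 i h1 hL) fun v hv =>
    not_lt.1 fun hlt => hZ.2.2.2 i h1 hL v (hZ.2.1 i h1 hL hv) hlt hv

lemma mul_card_succ_le (hZ : IsDecomp G α d L Z) {r D : ℝ}
    (hD : ∀ S : Finset V, S.Nonempty → density G S ≤ D) (hD0 : 0 ≤ D) (hr : 0 < r)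
    (hd : 2 * r * D < d) {i : ℕ} (h1 : 1 ≤ i) (hL : i < L) :
    r * #(Z (i + 1)) ≤ #(Z i) := by
  have hstep := hZ.mul_card_succ_le_two_mul_card_edgesIn h1 hL
  have hedges := card_edgesIn_le_of_density_le G hD (Z i)
  by_contra! hlt
  have hpos : (0 : ℝ) < #(Z (i + 1)) :=
    pos_of_mul_pos_right ((Nat.cast_nonneg _).trans_lt hlt) hr.le
  nlinarith

end IsDecomp

theorem decomp_top_level_empty_general (G : SimpleGraph V) (α d ε : ℝ)
    (hε0 : 0 < ε) (L : ℕ)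
    (hL : (L : ℤ) = 2 + ⌈Real.logb (1 + ε) (Fintype.card V)⌉)
    (Z : ℕ → Finset V) (hZ : IsDecomp G α d L Z) (dstar : ℝ)
    (hds : IsGreatest {x : ℝ | ∃ S : Finset V, S.Nonempty ∧ x = density G S} dstar)
    (hbig : 2 * (1 + ε) * dstar < d) :
    Z L = ∅ := by
  by_contra hne
  obtain ⟨v, hv⟩ := nonempty_iff_ne_empty.2 hne
  have hn' : 0 < Fintype.card V := Fintype.card_pos_iff.2 ⟨v⟩
  have hn : (0 : ℝ) < Fintype.card V := mod_cast hn'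
  have hdensity : ∀ S : Finset V, S.Nonempty → density G S ≤ dstar :=
    fun S hS => hds.2 ⟨S, hS, rfl⟩
  have hds0 : 0 ≤ dstar := by
    obtain ⟨S, -, rfl⟩ := hds.1
    exact density_nonneg G S
  obtain rfl : L = 1 + (⌈Real.logb (1 + ε) (Fintype.card V)⌉₊ + 1) := by
    have hlog : 0 ≤ Real.logb (1 + ε) (Fintype.card V) :=
      Real.logb_nonneg (by linarith) (mod_cast hn')
    have := Int.natCast_ceil_eq_ceil hlog
    omega
  have hshrink := pow_mul_le_of_mul_succ_le (f := fun i => (#(Z i) : ℝ)) (by linarith)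
    fun i h1 hi => hZ.mul_card_succ_le hdensity hds0 (by linarith) hbig h1 hi
  have hcard : (1 : ℝ) ≤ #(Z _) := mod_cast card_pos.2 ⟨v, hv⟩
  have := lt_pow_natCeil_logb_succ (by linarith : 1 < 1 + ε) hn
  simp only [hZ.1, card_univ] at hshrink
  nlinarith

/-- If `d > 2(1+ε)·d*`, then the topmost level of an `(α,d,L)`-decomposition is empty. -/
theorem decomp_top_level_empty (G : SimpleGraph V) (α d ε : ℝ)
    (hα : 1 ≤ α) (hd : 0 ≤ d) (hε0 : 0 < ε) (hε1 : ε < 1) (L : ℕ)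
    (hL : (L : ℤ) = 2 + ⌈Real.logb (1 + ε) (Fintype.card V)⌉)
    (Z : ℕ → Finset V) (hZ : IsDecomp G α d L Z) (dstar : ℝ)
    (hds : IsGreatest {x : ℝ | ∃ S : Finset V, S.Nonempty ∧ x = density G S} dstar)
    (hbig : 2 * (1 + ε) * dstar < d) :
    Z L = ∅ :=
  decomp_top_level_empty_general G α d ε hε0 L hL Z hZ dstar hds hbig
end

section
/- Let G = (V,E) be a finite simple graph with n nodes, fix α ≥ 1, d ≥ 0, ε ∈ (0,1), L = 2 + ⌈log_{1+ε} n⌉, and let (Z_1, …, Z_L) be an (α, d, L)-decomposition. If d < d*/α (where d* is the maximum density), then there exists an index j ∈ {1, …, L−1} such that ρ(Z_j) ≥ d/(2(1+ε)). -/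
open Finset
open scoped Classical

variable {V : Type*} [Fintype V] [DecidableEq V]

/-! Since `α d < d*`, every node of a densest set `S` has degree at least
`d* > α d` inside `S`, hence inside every level containing `S`, so `S` survives in all levels
and `Z L ≠ ∅`. If all levels `Z 1, …, Z (L-1)` were sparser than `d/(2(1+ε))`, then by
Markov's inequality on the degrees each level would shrink by a factor `1+ε`,
and after `L - 1 > log_{1+ε} n` steps `Z L` would be empty. -/

section Density

variable (G : SimpleGraph V)

def inducedOn (S : Finset V) : SimpleGraph V where
  Adj u v := G.Adj u v ∧ u ∈ S ∧ v ∈ S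
  symm := ⟨by rintro u v ⟨h, hu, hv⟩; exact ⟨h.symm, hv, hu⟩⟩
  loopless := ⟨by rintro v ⟨h, _⟩; exact G.irrefl h⟩

lemma edgeFinset_inducedOn (S : Finset V) : (inducedOn G S).edgeFinset = edgesIn G S := by
  ext e
  induction e with
  | _ u w =>
    rw [SimpleGraph.mem_edgeFinset]
    simp only [edgesIn, mem_filter, SimpleGraph.mem_edgeFinset, SimpleGraph.mem_edgeSet,
      inducedOn, Sym2.forall_mem_pair]

lemma degree_inducedOn (S : Finset V) (v : V) :
    (inducedOn G S).degree v = if v ∈ S then degIn G v S else 0 := by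
  rw [← SimpleGraph.card_neighborFinset_eq_degree, degIn]
  split_ifs with hv
  · congr 1
    ext u
    rw [SimpleGraph.mem_neighborFinset]
    simp [inducedOn, hv, and_comm]
  · rw [card_eq_zero]
    ext u
    rw [SimpleGraph.mem_neighborFinset]
    simp [inducedOn, hv]

lemma sum_degIn (S : Finset V) : ∑ v ∈ S, degIn G v S = 2 * (edgesIn G S).card := by
  rw [← edgeFinset_inducedOn, ← SimpleGraph.sum_degrees_eq_twice_card_edges,
    ← sum_subset (subset_univ S) fun v _ hv => by simp [degree_inducedOn, hv]]
  exact sum_congr rfl fun v hv => by simp [degree_inducedOn, hv]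

lemma card_edgesIn_erase_add_degIn {S : Finset V} {v : V} (hv : v ∈ S) :
    (edgesIn G (S.erase v)).card + degIn G v S = (edgesIn G S).card := by
  have hincident : ((edgesIn G S).filter (v ∈ ·)).card = degIn G v S := by
    rw [← edgeFinset_inducedOn, ← SimpleGraph.incidenceFinset_eq_filter,
      SimpleGraph.card_incidenceFinset_eq_degree, degree_inducedOn, if_pos hv]
  have havoiding : (edgesIn G S).filter (v ∉ ·) = edgesIn G (S.erase v) := by
    ext e
    simp only [edgesIn, mem_filter, mem_erase]
    constructor
    · rintro ⟨⟨he, hS⟩, hve⟩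
      exact ⟨he, fun x hx => ⟨fun hxv => hve (hxv ▸ hx), hS x hx⟩⟩
    · rintro ⟨he, hS⟩
      exact ⟨⟨he, fun x hx => (hS x hx).2⟩, fun hve => (hS v hve).1 rfl⟩
  rw [← havoiding, ← hincident, add_comm]
  exact card_filter_add_card_filter_not _

/-- Unlike `|E(S)| = ρ(S) |S|` read off the definition, this also holds for `S = ∅`. -/
lemma density_mul_card (S : Finset V) : density G S * S.card = (edgesIn G S).card := by
  rcases S.eq_empty_or_nonempty with rfl | hS
  · have h := sum_degIn G ∅
    simp only [sum_empty] at h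
    simp [card_eq_zero.mp (by omega : (edgesIn G ∅).card = 0)]
  · exact div_mul_cancel₀ _ (Nat.cast_ne_zero.mpr hS.card_pos.ne')

/-- The reason a densest set has minimum degree at least its density. -/
lemma density_le_degIn {S : Finset V} {v : V} (hv : v ∈ S)
    (h : density G (S.erase v) ≤ density G S) : density G S ≤ degIn G v S := by
  have hsplit : ((edgesIn G (S.erase v)).card : ℝ) + degIn G v S = (edgesIn G S).card := by
    exact_mod_cast card_edgesIn_erase_add_degIn G hv
  have hcard : ((S.erase v).card : ℝ) + 1 = S.card := by exact_mod_cast card_erase_add_one hv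
  have hS := density_mul_card G S
  have hT := density_mul_card G (S.erase v)
  have hmono := mul_le_mul_of_nonneg_right h (Nat.cast_nonneg (α := ℝ) (S.erase v).card)
  rw [← hcard] at hS
  linarith

lemma density_le_of_isGreatest {ρ : ℝ}
    (h : IsGreatest {x : ℝ | ∃ S : Finset V, S.Nonempty ∧ x = density G S} ρ)
    (T : Finset V) : density G T ≤ ρ := by
  rcases T.eq_empty_or_nonempty with rfl | hT
  · obtain ⟨S, -, rfl⟩ := h.1
    simpa [density] using density_nonneg G S
  · exact h.2 ⟨T, hT, rfl⟩

end Density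

lemma mul_pow_le_of_forall_mul_le {f : ℕ → ℝ} {r : ℝ} (hr : 0 ≤ r) {m : ℕ}
    (h : ∀ k < m, f (k + 1) * r ≤ f k) : f m * r ^ m ≤ f 0 := by
  induction m with
  | zero => simp
  | succ m ih =>
    calc f (m + 1) * r ^ (m + 1) = f (m + 1) * r * r ^ m := by ring
      _ ≤ f m * r ^ m := by gcongr; exact h m (by omega)
      _ ≤ f 0 := ih fun k hk => h k (by omega)

lemma natCast_lt_pow_of_eq_one_add_ceil_logb {b : ℝ} (hb : 1 < b) (n k : ℕ)
    (hk : (k : ℤ) = 1 + ⌈Real.logb b n⌉) : (n : ℝ) < b ^ k := by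
  rcases n.eq_zero_or_pos with rfl | hn
  · simp only [Nat.cast_zero]
    positivity
  rw [← Real.rpow_natCast, ← Real.logb_lt_iff_lt_rpow hb (by exact_mod_cast hn)]
  have : ((k : ℤ) : ℝ) = 1 + ⌈Real.logb b n⌉ := by exact_mod_cast hk
  push_cast at this
  linarith [Int.le_ceil (Real.logb b n)]

namespace IsDecomp

variable {G : SimpleGraph V} {α d : ℝ} {L : ℕ} {Z : ℕ → Finset V}

omit [DecidableEq V] in
lemma subset_of_lt_degIn (hZ : IsDecomp G α d L Z) {S : Finset V}
    (hS : ∀ v ∈ S, α * d < degIn G v S) {i : ℕ} (hi : 1 ≤ i) (hiL : i ≤ L) : S ⊆ Z i := by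
  induction i, hi using Nat.le_induction with
  | base => exact hZ.1 ▸ subset_univ S
  | succ i hi ih =>
    have hSZ := ih (by omega)
    intro v hv
    refine hZ.2.2.1 i hi (by omega) v (hSZ hv) ((hS v hv).trans_le ?_)
    exact_mod_cast card_le_card (filter_subset_filter _ hSZ)

/-- Markov's inequality: every node of `Z (i+1)` has degree at least `d` in `Z i`. -/
lemma card_succ_mul_le (hZ : IsDecomp G α d L Z) {i : ℕ} (hi : 1 ≤ i) (hiL : i < L) :
    (Z (i + 1)).card * d ≤ 2 * (edgesIn G (Z i)).card := by
  have hsub := hZ.2.1 i hi hiL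
  have hdeg : ∀ v ∈ Z (i + 1), d ≤ degIn G v (Z i) := fun v hv =>
    not_lt.mp fun hlt => hZ.2.2.2 i hi hiL v (hsub hv) hlt hv
  calc (Z (i + 1)).card * d = ∑ _v ∈ Z (i + 1), d := by rw [sum_const, nsmul_eq_mul]
    _ ≤ ∑ v ∈ Z (i + 1), (degIn G v (Z i) : ℝ) := sum_le_sum hdeg
    _ ≤ ∑ v ∈ Z i, (degIn G v (Z i) : ℝ) :=
      sum_le_sum_of_subset_of_nonneg hsub fun _ _ _ => Nat.cast_nonneg _
    _ = 2 * (edgesIn G (Z i)).card := by exact_mod_cast sum_degIn G (Z i)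

lemma card_succ_mul_le_of_density_lt (hZ : IsDecomp G α d L Z) {i : ℕ} (hi : 1 ≤ i)
    (hiL : i < L) {c : ℝ} (hc : 0 < c) (hsparse : 2 * c * density G (Z i) < d) :
    (Z (i + 1)).card * c ≤ (Z i).card := by
  have hd : 0 < d := by nlinarith [density_nonneg G (Z i)]
  have hmarkov := hZ.card_succ_mul_le hi hiL
  rw [← density_mul_card] at hmarkov
  have hcard : (0 : ℝ) ≤ (Z i).card := Nat.cast_nonneg _
  refine le_of_mul_le_mul_right ?_ hd
  nlinarith [mul_le_mul_of_nonneg_left hmarkov hc.le, mul_le_mul_of_nonneg_right hsparse.le hcard]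

end IsDecomp

theorem decomp_dense_level_exists_general (G : SimpleGraph V) (α d ε : ℝ)
    (hα : 1 ≤ α) (hε0 : 0 < ε) (L : ℕ)
    (hL : (L : ℤ) = 2 + ⌈Real.logb (1 + ε) (Fintype.card V)⌉)
    (Z : ℕ → Finset V) (hZ : IsDecomp G α d L Z) (dstar : ℝ)
    (hds : IsGreatest {x : ℝ | ∃ S : Finset V, S.Nonempty ∧ x = density G S} dstar)
    (hsmall : d < dstar / α) :
    ∃ j, 1 ≤ j ∧ j ≤ L - 1 ∧ d / (2 * (1 + ε)) ≤ density G (Z j) := by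
  obtain ⟨S, hSne, rfl⟩ := hds.1
  by_contra! hsparse
  have hL2 : 2 ≤ L := by
    have hn : 1 ≤ (Fintype.card V : ℝ) :=
      Nat.one_le_cast.mpr (hSne.card_pos.trans_le (card_le_univ S))
    have := Int.ceil_nonneg (Real.logb_nonneg (b := 1 + ε) (by linarith) hn)
    omega
  have hshrink : ∀ k < L - 1, ((Z (k + 2)).card : ℝ) * (1 + ε) ≤ (Z (k + 1)).card :=
    fun k hk => hZ.card_succ_mul_le_of_density_lt (by omega) (by omega) (by linarith) <| by
      have := hsparse (k + 1) (by omega) (by omega)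
      rwa [lt_div_iff₀' (by linarith)] at this
  have hZL : Z L = ∅ := by
    have hdecay := mul_pow_le_of_forall_mul_le (f := fun k => ((Z (k + 1)).card : ℝ))
      (by linarith) hshrink
    have hpow := natCast_lt_pow_of_eq_one_add_ceil_logb (by linarith : 1 < 1 + ε)
      (Fintype.card V) (L - 1) (by omega)
    simp only [zero_add, Nat.sub_add_cancel (by omega : 1 ≤ L), hZ.1, card_univ] at hdecay
    have : ((Z L).card : ℝ) < 1 := by nlinarith
    exact card_eq_zero.mp (Nat.lt_one_iff.mp (by exact_mod_cast this))
  have hαd : α * d < density G S := (lt_div_iff₀' (by linarith)).mp hsmall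
  have hSL : S ⊆ Z L := hZ.subset_of_lt_degIn (fun v hv => hαd.trans_le <|
    density_le_degIn G hv (density_le_of_isGreatest G hds _)) (by omega) le_rfl
  exact hSne.ne_empty (subset_empty.mp (hZL ▸ hSL))

/-- If `d < d*/α`, then some level `j ∈ {1,…,L−1}` of an `(α,d,L)`-decomposition has
density at least `d/(2(1+ε))`. -/
theorem decomp_dense_level_exists (G : SimpleGraph V) (α d ε : ℝ)
    (hα : 1 ≤ α) (hd : 0 ≤ d) (hε0 : 0 < ε) (hε1 : ε < 1) (L : ℕ)
    (hL : (L : ℤ) = 2 + ⌈Real.logb (1 + ε) (Fintype.card V)⌉)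
    (Z : ℕ → Finset V) (hZ : IsDecomp G α d L Z) (dstar : ℝ)
    (hds : IsGreatest {x : ℝ | ∃ S : Finset V, S.Nonempty ∧ x = density G S} dstar)
    (hsmall : d < dstar / α) :
    ∃ j, 1 ≤ j ∧ j ≤ L - 1 ∧ d / (2 * (1 + ε)) ≤ density G (Z j) :=
  decomp_dense_level_exists_general G α d ε hα hε0 L hL Z hZ dstar hds hsmall
end

section
/- Let G = (V,E) be a finite directed graph and let (S*, T*) with S*, T* ⊆ V nonempty be a pair maximizing the directed density ρ(S,T) = |E(S,T)|/√(|S|·|T|). Define λ_S = |E(S*,T*)|·(1 − √(1 − 1/|S*|)) and λ_T = |E(S*,T*)|·(1 − √(1 − 1/|T*|)). Then every node s ∈ S* has out-degree into T* at least λ_S, and every node t ∈ T* has in-degree from S* at least λ_T. -/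
open Finset
open scoped Classical

variable {V : Type*} [Fintype V] [DecidableEq V]

/-- The set of directed edges of the relation `R` going from `S` to `T`. -/
noncomputable def edgesBtw (R : V → V → Prop) (S T : Finset V) : Finset (V × V) :=
  (S ×ˢ T).filter fun p => R p.1 p.2

/-- Out-degree of `s` into the node set `T`. -/
noncomputable def outDeg (R : V → V → Prop) (s : V) (T : Finset V) : ℕ :=
  (T.filter fun t => R s t).card

/-- In-degree of `t` from the node set `S`. -/
noncomputable def inDeg (R : V → V → Prop) (t : V) (S : Finset V) : ℕ :=
  (S.filter fun s => R s t).card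

/-- Directed density `ρ(S,T) = |E(S,T)| / √(|S|·|T|)`. -/
noncomputable def rhoD (R : V → V → Prop) (S T : Finset V) : ℝ :=
  (edgesBtw R S T).card / Real.sqrt ((S.card : ℝ) * T.card)

set_option linter.unusedSectionVars false in
lemma edges_card_sum_out (R : V → V → Prop) (S T : Finset V) :
    (edgesBtw R S T).card = ∑ s ∈ S, outDeg R s T := by
  unfold edgesBtw outDeg
  rw [Finset.card_filter, Finset.sum_product]
  exact Finset.sum_congr rfl fun x _ => (Finset.card_filter _ _).symm

lemma edges_card_sum_in (R : V → V → Prop) (S T : Finset V) :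
    (edgesBtw R S T).card = ∑ t ∈ T, inDeg R t S := by
  unfold edgesBtw inDeg
  rw [Finset.card_filter, Finset.sum_product]
  rw [Finset.sum_comm]
  exact Finset.sum_congr rfl fun x _ => (Finset.card_filter _ _).symm

lemma key_real (E a d m n : ℝ) (ha : 0 ≤ a) (hm : 2 ≤ m) (hn : 1 ≤ n)
    (hE : E = a + d)
    (h : a / Real.sqrt ((m - 1) * n) ≤ E / Real.sqrt (m * n)) :
    E * (1 - Real.sqrt (1 - 1 / m)) ≤ d := by
  have hm0 : (0:ℝ) < m := by linarith
  have hn0 : (0:ℝ) < n := by linarith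
  have hx0 : (0:ℝ) ≤ 1 - 1 / m := by
    have : 1 / m ≤ 1 := by rw [div_le_one hm0]; linarith
    linarith
  have h1 : 0 < Real.sqrt ((m - 1) * n) :=
    Real.sqrt_pos.mpr (mul_pos (by linarith) hn0)
  have h2 : 0 < Real.sqrt (m * n) := Real.sqrt_pos.mpr (mul_pos hm0 hn0)
  rw [div_le_div_iff₀ h1 h2] at h
  have hsq : Real.sqrt ((m - 1) * n) = Real.sqrt (1 - 1 / m) * Real.sqrt (m * n) := by
    rw [← Real.sqrt_mul hx0]
    congr 1
    field_simp
  rw [hsq] at h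
  have key2 : a ≤ E * Real.sqrt (1 - 1 / m) := by
    have := mul_le_mul_of_nonneg_right h (le_of_lt (inv_pos.mpr h2))
    calc a = a * (Real.sqrt (m * n) * (Real.sqrt (m * n))⁻¹) := by
            rw [mul_inv_cancel₀ (ne_of_gt h2), mul_one]
      _ = a * Real.sqrt (m * n) * (Real.sqrt (m * n))⁻¹ := by ring
      _ ≤ E * (Real.sqrt (1 - 1/m) * Real.sqrt (m * n)) * (Real.sqrt (m * n))⁻¹ := this
      _ = E * Real.sqrt (1 - 1/m) * (Real.sqrt (m * n) * (Real.sqrt (m * n))⁻¹) := by ring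
      _ = E * Real.sqrt (1 - 1/m) := by rw [mul_inv_cancel₀ (ne_of_gt h2), mul_one]
  nlinarith [key2]

lemma key_real' (E a d m n : ℝ) (ha : 0 ≤ a) (hm : 1 ≤ m) (hn : 2 ≤ n)
    (hE : E = a + d)
    (h : a / Real.sqrt (m * (n - 1)) ≤ E / Real.sqrt (m * n)) :
    E * (1 - Real.sqrt (1 - 1 / n)) ≤ d := by
  apply key_real E a d n m ha hn hm hE
  rw [mul_comm m (n - 1), mul_comm m n] at h
  exact h

/-- Min-degree property of a directed densest pair `(S*, T*)`: every `s ∈ S*` has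
out-degree into `T*` at least `λ_S`, and every `t ∈ T*` has in-degree from `S*`
at least `λ_T`. -/
theorem directed_densest_min_degree (R : V → V → Prop) (Sstar Tstar : Finset V)
    (hS : Sstar.Nonempty) (hT : Tstar.Nonempty)
    (hmax : ∀ S T : Finset V, S.Nonempty → T.Nonempty →
      rhoD R S T ≤ rhoD R Sstar Tstar)
    (lamS lamT : ℝ)
    (hlS : lamS = ((edgesBtw R Sstar Tstar).card : ℝ) *
      (1 - Real.sqrt (1 - 1 / Sstar.card)))
    (hlT : lamT = ((edgesBtw R Sstar Tstar).card : ℝ) *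
      (1 - Real.sqrt (1 - 1 / Tstar.card))) :
    (∀ s ∈ Sstar, lamS ≤ (outDeg R s Tstar : ℝ)) ∧
    (∀ t ∈ Tstar, lamT ≤ (inDeg R t Sstar : ℝ)) := by
  constructor
  · intro s hs
    by_cases h1 : Sstar.card = 1
    · have hE : (edgesBtw R Sstar Tstar).card = outDeg R s Tstar := by
        obtain ⟨x, hx⟩ := Finset.card_eq_one.mp h1
        have hsx : s = x := by simpa [hx] using hs
        rw [edges_card_sum_out, hx, Finset.sum_singleton, hsx]
      have hz : (1:ℝ) - 1 / (Sstar.card : ℝ) = 0 := by rw [h1]; norm_num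
      rw [hlS, hz, Real.sqrt_zero, hE]
      simp
    · have h2 : 2 ≤ Sstar.card := by have := hS.card_pos; omega
      have hne : (Sstar.erase s).Nonempty := by
        rw [← Finset.card_pos, Finset.card_erase_of_mem hs]; omega
      have hmax' := hmax _ _ hne hT
      unfold rhoD at hmax'
      have hcerase : (((Sstar.erase s).card : ℝ)) = (Sstar.card : ℝ) - 1 := by
        rw [Finset.card_erase_of_mem hs, Nat.cast_sub (by omega)]; norm_num
      rw [hcerase] at hmax'
      have hEdec : ((edgesBtw R Sstar Tstar).card : ℝ)
          = ((edgesBtw R (Sstar.erase s) Tstar).card : ℝ) + (outDeg R s Tstar : ℝ) := by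
        rw [edges_card_sum_out R Sstar, edges_card_sum_out R (Sstar.erase s),
          ← Finset.add_sum_erase _ _ hs]
        push_cast; ring
      rw [hlS]
      exact key_real _ _ _ _ _ (Nat.cast_nonneg _) (by exact_mod_cast h2)
        (by exact_mod_cast hT.card_pos) hEdec hmax'
  · intro t ht
    by_cases h1 : Tstar.card = 1
    · have hE : (edgesBtw R Sstar Tstar).card = inDeg R t Sstar := by
        obtain ⟨x, hx⟩ := Finset.card_eq_one.mp h1
        have htx : t = x := by simpa [hx] using ht
        rw [edges_card_sum_in, hx, Finset.sum_singleton, htx]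
      have hz : (1:ℝ) - 1 / (Tstar.card : ℝ) = 0 := by rw [h1]; norm_num
      rw [hlT, hz, Real.sqrt_zero, hE]
      simp
    · have h2 : 2 ≤ Tstar.card := by have := hT.card_pos; omega
      have hne : (Tstar.erase t).Nonempty := by
        rw [← Finset.card_pos, Finset.card_erase_of_mem ht]; omega
      have hmax' := hmax _ _ hS hne
      unfold rhoD at hmax'
      have hcerase : (((Tstar.erase t).card : ℝ)) = (Tstar.card : ℝ) - 1 := by
        rw [Finset.card_erase_of_mem ht, Nat.cast_sub (by omega)]; norm_num
      rw [hcerase] at hmax'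
      have hEdec : ((edgesBtw R Sstar Tstar).card : ℝ)
          = ((edgesBtw R Sstar (Tstar.erase t)).card : ℝ) + (inDeg R t Sstar : ℝ) := by
        rw [edges_card_sum_in R Sstar Tstar, edges_card_sum_in R Sstar (Tstar.erase t),
          ← Finset.add_sum_erase _ _ ht]
        push_cast; ring
      rw [hlT]
      exact key_real' _ _ _ _ _ (Nat.cast_nonneg _) (by exact_mod_cast hS.card_pos)
        (by exact_mod_cast h2) hEdec hmax'
end

section
/- Let G = (V,E) be a finite directed graph with densest pair (S*,T*) achieving ρ*(G) = |E(S*,T*)|/√(|S*||T*|), and define λ_S = |E(S*,T*)|·(1 − √(1 − 1/|S*|)), λ_T = |E(S*,T*)|·(1 − √(1 − 1/|T*|)). Then ρ*(G)/2 ≤ √(λ_S·λ_T) ≤ ρ*(G). -/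
open Finset
open scoped Classical

variable {V : Type*} [Fintype V] [DecidableEq V]

/-- Key algebraic bounds: for `n ≥ 1`, `1/(2n) ≤ 1 - √(1 - 1/n) ≤ 1/n`. -/
lemma one_sub_sqrt_bounds (n : ℝ) (hn : 1 ≤ n) :
    1 / (2 * n) ≤ 1 - Real.sqrt (1 - 1 / n) ∧ 1 - Real.sqrt (1 - 1 / n) ≤ 1 / n := by
  have hn0 : 0 < n := lt_of_lt_of_le one_pos hn
  have hy0 : (0 : ℝ) ≤ 1 - 1 / n := by
    have : 1 / n ≤ 1 := by rw [div_le_one hn0]; exact hn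
    linarith
  have hy1 : 1 - 1 / n ≤ 1 := by
    have : (0:ℝ) < 1 / n := by positivity
    linarith
  constructor
  · -- sqrt (1 - 1/n) ≤ 1 - 1/(2n)
    have h1 : (1 : ℝ) - 1 / n ≤ (1 - 1 / (2 * n)) ^ 2 := by
      have : (1 - 1 / (2 * n)) ^ 2 = 1 - 1 / n + (1 / (2 * n)) ^ 2 := by
        field_simp; ring
      nlinarith [sq_nonneg (1 / (2 * n))]
    have h2 : Real.sqrt (1 - 1 / n) ≤ 1 - 1 / (2 * n) := by
      have hnn : (0 : ℝ) ≤ 1 - 1 / (2 * n) := by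
        have : 1 / (2 * n) ≤ 1 := by
          rw [div_le_one (by positivity)]; linarith
        linarith
      calc Real.sqrt (1 - 1 / n) ≤ Real.sqrt ((1 - 1 / (2 * n)) ^ 2) :=
            Real.sqrt_le_sqrt h1
        _ = 1 - 1 / (2 * n) := Real.sqrt_sq hnn
    linarith
  · -- 1 - 1/n ≤ sqrt (1 - 1/n)
    have h1 : (1 : ℝ) - 1 / n ≤ Real.sqrt (1 - 1 / n) := by
      have h := Real.sqrt_le_sqrt (show (1 - 1 / n) ^ 2 ≤ 1 - 1 / n by nlinarith)
      rwa [Real.sqrt_sq hy0] at h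
    linarith

/-- For a directed densest pair `(S*,T*)`: `ρ*(G)/2 ≤ √(λ_S·λ_T) ≤ ρ*(G)`. -/
theorem directed_densest_lambda_bounds (R : V → V → Prop) (Sstar Tstar : Finset V)
    (hS : Sstar.Nonempty) (hT : Tstar.Nonempty)
    (hmax : ∀ S T : Finset V, S.Nonempty → T.Nonempty →
      rhoD R S T ≤ rhoD R Sstar Tstar)
    (lamS lamT : ℝ)
    (hlS : lamS = ((edgesBtw R Sstar Tstar).card : ℝ) *
      (1 - Real.sqrt (1 - 1 / Sstar.card)))
    (hlT : lamT = ((edgesBtw R Sstar Tstar).card : ℝ) *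
      (1 - Real.sqrt (1 - 1 / Tstar.card))) :
    rhoD R Sstar Tstar / 2 ≤ Real.sqrt (lamS * lamT) ∧
    Real.sqrt (lamS * lamT) ≤ rhoD R Sstar Tstar := by
  set m : ℝ := ((edgesBtw R Sstar Tstar).card : ℝ) with hm
  have hm0 : 0 ≤ m := by positivity
  set s : ℝ := (Sstar.card : ℝ) with hsdef
  set t : ℝ := (Tstar.card : ℝ) with htdef
  have hs1 : 1 ≤ s := by
    rw [hsdef]; exact_mod_cast Finset.card_pos.mpr hS
  have ht1 : 1 ≤ t := by
    rw [htdef]; exact_mod_cast Finset.card_pos.mpr hT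
  have hs0 : 0 < s := lt_of_lt_of_le one_pos hs1
  have ht0 : 0 < t := lt_of_lt_of_le one_pos ht1
  set a : ℝ := 1 - Real.sqrt (1 - 1 / s) with hadef
  set b : ℝ := 1 - Real.sqrt (1 - 1 / t) with hbdef
  obtain ⟨haL, haU⟩ := one_sub_sqrt_bounds s hs1
  obtain ⟨hbL, hbU⟩ := one_sub_sqrt_bounds t ht1
  have ha0 : 0 ≤ a := le_trans (by positivity) haL
  have hb0 : 0 ≤ b := le_trans (by positivity) hbL
  have hprod : lamS * lamT = m ^ 2 * (a * b) := by
    rw [hlS, hlT]; ring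
  have hsqrt : Real.sqrt (lamS * lamT) = m * Real.sqrt (a * b) := by
    rw [hprod, Real.sqrt_mul (sq_nonneg m), Real.sqrt_sq hm0]
  have hst0 : 0 < s * t := mul_pos hs0 ht0
  have hsst : 0 < Real.sqrt (s * t) := Real.sqrt_pos.mpr hst0
  have hsq : Real.sqrt (s * t) ^ 2 = s * t := Real.sq_sqrt hst0.le
  have hrho : rhoD R Sstar Tstar = m / Real.sqrt (s * t) := by
    rw [rhoD]
  constructor
  · -- lower bound
    rw [hsqrt, hrho]
    have hlo : (1 / (2 * Real.sqrt (s * t))) ^ 2 ≤ a * b := by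
      have h1 : 1 / (2 * s) * (1 / (2 * t)) ≤ a * b :=
        mul_le_mul haL hbL (by positivity) ha0
      have h2 : (1 / (2 * Real.sqrt (s * t))) ^ 2 = 1 / (4 * (s * t)) := by
        rw [div_pow, mul_pow, hsq]; norm_num
      have h2' : 1 / (2 * s) * (1 / (2 * t)) = 1 / (4 * (s * t)) := by
        field_simp; ring
      linarith
    have h3 : 1 / (2 * Real.sqrt (s * t)) ≤ Real.sqrt (a * b) := by
      calc 1 / (2 * Real.sqrt (s * t))
          = Real.sqrt ((1 / (2 * Real.sqrt (s * t))) ^ 2) :=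
            (Real.sqrt_sq (by positivity)).symm
        _ ≤ Real.sqrt (a * b) := Real.sqrt_le_sqrt hlo
    calc m / Real.sqrt (s * t) / 2 = m * (1 / (2 * Real.sqrt (s * t))) := by ring
      _ ≤ m * Real.sqrt (a * b) := mul_le_mul_of_nonneg_left h3 hm0
  · -- upper bound
    rw [hsqrt, hrho]
    have hhi : a * b ≤ (1 / Real.sqrt (s * t)) ^ 2 := by
      have h1 : a * b ≤ 1 / s * (1 / t) :=
        mul_le_mul haU hbU hb0 (by positivity)
      have h2 : (1 / Real.sqrt (s * t)) ^ 2 = 1 / (s * t) := by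
        rw [div_pow, hsq]; norm_num
      have h2' : 1 / s * (1 / t) = 1 / (s * t) := by
        rw [div_mul_div_comm, one_mul]
      linarith
    have h3 : Real.sqrt (a * b) ≤ 1 / Real.sqrt (s * t) := by
      calc Real.sqrt (a * b) ≤ Real.sqrt ((1 / Real.sqrt (s * t)) ^ 2) :=
            Real.sqrt_le_sqrt hhi
        _ = 1 / Real.sqrt (s * t) := Real.sqrt_sq (by positivity)
    calc m * Real.sqrt (a * b) ≤ m * (1 / Real.sqrt (s * t)) :=
          mul_le_mul_of_nonneg_left h3 hm0
      _ = m / Real.sqrt (s * t) := by ring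
end

section
/- Let G = (V,E) be a directed graph with densest pair (S*,T*), and λ_S, λ_T defined as in the min-degree bounds for directed densest subgraphs. Let ((S_1,…,S_L),(T_1,…,T_L)) be an (α, d_S, d_T, L)-decomposition with α ≥ 1. If d_S < λ_S/α and d_T < λ_T/α, then S* ⊆ S_i and T* ⊆ T_i for all i ∈ {1,…,L}; in particular the topmost level S_L ∪ T_L is nonempty. -/
open Finset
open scoped Classical

variable {V : Type*} [Fintype V] [DecidableEq V]

/-- An `(α, d_S, d_T, L)`-decomposition of a directed graph `R`. -/
def IsDirDecomp (R : V → V → Prop) (α dS dT : ℝ) (L : ℕ) (S T : ℕ → Finset V) : Prop :=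
  S 1 = Finset.univ ∧ T 1 = Finset.univ ∧
  (∀ i, 1 ≤ i → i < L → S (i + 1) ⊆ S i ∧ T (i + 1) ⊆ T i) ∧
  (∀ i, 1 ≤ i → i < L → ∀ s ∈ S i, α * dS < (outDeg R s (T i) : ℝ) → s ∈ S (i + 1)) ∧
  (∀ i, 1 ≤ i → i < L → ∀ s ∈ S i, (outDeg R s (T i) : ℝ) < dS → s ∉ S (i + 1)) ∧
  (∀ i, 1 ≤ i → i < L → ∀ t ∈ T i, α * dT < (inDeg R t (S i) : ℝ) → t ∈ T (i + 1)) ∧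
  (∀ i, 1 ≤ i → i < L → ∀ t ∈ T i, (inDeg R t (S i) : ℝ) < dT → t ∉ T (i + 1))

/-!
Deleting a vertex `s` from `S*` cannot raise the density `ρ(S*, T*)`. With `k = |S*|` and
`E = |E(S*, T*)|` this reads `(E - deg s) / √(k - 1) ≤ E / √k`, i.e. `deg s ≥ λ_S`, and symmetrically
for `T*` after reversing all edges. Since `α d_S < λ_S`, and degrees into `T_i ⊇ T*` are at least
degrees into `T*`, every vertex of `S*` passes the promotion threshold of every level, and
induction on the level keeps `(S*, T*)` inside `(S_i, T_i)`.
-/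

def IsDensestPair (R : V → V → Prop) (S T : Finset V) : Prop :=
  ∀ A B : Finset V, A.Nonempty → B.Nonempty → rhoD R A B ≤ rhoD R S T

lemma le_mul_sqrt_one_sub_inv_of_div_sqrt_le {x E k m : ℝ} (hk : 1 < k) (hm : 0 < m)
    (h : x / √((k - 1) * m) ≤ E / √(k * m)) : x ≤ E * √(1 - 1 / k) := by
  have hk0 : 0 < k := by linarith
  have hpos : 0 < √((k - 1) * m) := Real.sqrt_pos.mpr (by nlinarith)
  calc x ≤ E / √(k * m) * √((k - 1) * m) := (div_le_iff₀ hpos).mp h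
    _ = E * √((k - 1) * m / (k * m)) := by
        rw [Real.sqrt_div' _ (by positivity)]; ring
    _ = E * √(1 - 1 / k) := by
        congr 2; field_simp

section Degrees

omit [Fintype V] [DecidableEq V]

variable (R : V → V → Prop)

lemma card_edgesBtw_eq_sum_outDeg (S T : Finset V) :
    #(edgesBtw R S T) = ∑ s ∈ S, outDeg R s T := by
  rw [edgesBtw, card_filter, sum_product]
  exact sum_congr rfl fun s _ => (card_filter _ _).symm

lemma card_edgesBtw_erase_add_outDeg [DecidableEq V] {S : Finset V} {s : V} (hs : s ∈ S)
    (T : Finset V) :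
    #(edgesBtw R (S.erase s) T) + outDeg R s T = #(edgesBtw R S T) := by
  simp only [card_edgesBtw_eq_sum_outDeg]
  exact sum_erase_add S _ hs

lemma card_edgesBtw_flip (S T : Finset V) :
    #(edgesBtw (flip R) T S) = #(edgesBtw R S T) := by
  refine card_nbij' Prod.swap Prod.swap ?_ ?_ (fun _ _ => rfl) (fun _ _ => rfl) <;>
    rintro ⟨a, b⟩ <;> simp only [edgesBtw, coe_filter, mem_product, Prod.swap_prod_mk] <;>
    exact fun h => ⟨h.1.symm, h.2⟩

lemma rhoD_flip (S T : Finset V) : rhoD (flip R) T S = rhoD R S T := by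
  rw [rhoD, rhoD, card_edgesBtw_flip, mul_comm]

lemma outDeg_mono (s : V) {T T' : Finset V} (h : T ⊆ T') : outDeg R s T ≤ outDeg R s T' :=
  card_le_card (filter_subset_filter _ h)

lemma inDeg_mono (t : V) {S S' : Finset V} (h : S ⊆ S') : inDeg R t S ≤ inDeg R t S' :=
  card_le_card (filter_subset_filter _ h)

variable {R} {S T : Finset V}

lemma IsDensestPair.flip (h : IsDensestPair R S T) : IsDensestPair (flip R) T S := by
  intro A B hA hB
  rw [rhoD_flip, rhoD_flip]
  exact h B A hB hA

theorem IsDensestPair.le_outDeg [DecidableEq V] (h : IsDensestPair R S T) (hT : T.Nonempty)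
    {s : V} (hs : s ∈ S) :
    (#(edgesBtw R S T) : ℝ) * (1 - √(1 - 1 / #S)) ≤ outDeg R s T := by
  have hsplit : (#(edgesBtw R (S.erase s) T) : ℝ) + outDeg R s T = #(edgesBtw R S T) := by
    exact_mod_cast card_edgesBtw_erase_add_outDeg R hs T
  suffices hrest : (#(edgesBtw R (S.erase s) T) : ℝ) ≤ #(edgesBtw R S T) * √(1 - 1 / #S) by
    linarith
  rcases (S.erase s).eq_empty_or_nonempty with hempty | hne
  · rw [hempty, show edgesBtw R ∅ T = ∅ by simp [edgesBtw], card_empty, Nat.cast_zero]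
    positivity
  · have hcard : (#(S.erase s) : ℝ) = #S - 1 := by
      rw [← card_erase_add_one hs]; push_cast; ring
    have hk : (1 : ℝ) < #S := by
      have : (0 : ℝ) < #(S.erase s) := by exact_mod_cast hne.card_pos
      linarith
    have hm : (0 : ℝ) < #T := by exact_mod_cast hT.card_pos
    have hdens := h _ _ hne hT
    rw [rhoD, rhoD, hcard] at hdens
    exact le_mul_sqrt_one_sub_inv_of_div_sqrt_le hk hm hdens

theorem IsDensestPair.le_inDeg (h : IsDensestPair R S T) (hS : S.Nonempty) {t : V}
    (ht : t ∈ T) :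
    (#(edgesBtw R S T) : ℝ) * (1 - √(1 - 1 / #T)) ≤ inDeg R t S := by
  have := h.flip.le_outDeg hS ht
  rwa [card_edgesBtw_flip] at this

end Degrees

omit [DecidableEq V] in
theorem IsDirDecomp.subset_of_lt_deg {R : V → V → Prop} {α dS dT : ℝ} {L : ℕ}
    {S T : ℕ → Finset V} (hdec : IsDirDecomp R α dS dT L S T) {A B : Finset V}
    (hA : ∀ s ∈ A, α * dS < outDeg R s B) (hB : ∀ t ∈ B, α * dT < inDeg R t A) :
    ∀ i, 1 ≤ i → i ≤ L → A ⊆ S i ∧ B ⊆ T i := by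
  obtain ⟨hS1, hT1, -, hSup, -, hTup, -⟩ := hdec
  refine Nat.le_induction (fun _ => ⟨hS1 ▸ subset_univ A, hT1 ▸ subset_univ B⟩) ?_
  intro i hi ih hiL
  obtain ⟨hAS, hBT⟩ := ih (by omega)
  refine ⟨fun s hs => hSup i hi hiL s (hAS hs) ?_, fun t ht => hTup i hi hiL t (hBT ht) ?_⟩
  · exact (hA s hs).trans_le (by exact_mod_cast outDeg_mono R s hBT)
  · exact (hB t ht).trans_le (by exact_mod_cast inDeg_mono R t hAS)

/-- If `d_S < λ_S/α` and `d_T < λ_T/α`, the densest pair survives in every level of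
an `(α, d_S, d_T, L)`-decomposition; in particular the topmost level is nonempty. -/
theorem directed_decomp_top_level_nonempty (R : V → V → Prop) (α dS dT : ℝ)
    (hα : 1 ≤ α) (L : ℕ) (hL : 1 ≤ L)
    (S T : ℕ → Finset V) (hdec : IsDirDecomp R α dS dT L S T)
    (Sstar Tstar : Finset V) (hSne : Sstar.Nonempty) (hTne : Tstar.Nonempty)
    (hmax : ∀ A B : Finset V, A.Nonempty → B.Nonempty →
      rhoD R A B ≤ rhoD R Sstar Tstar)
    (lamS lamT : ℝ)
    (hlS : lamS = ((edgesBtw R Sstar Tstar).card : ℝ) *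
      (1 - Real.sqrt (1 - 1 / Sstar.card)))
    (hlT : lamT = ((edgesBtw R Sstar Tstar).card : ℝ) *
      (1 - Real.sqrt (1 - 1 / Tstar.card)))
    (hdS : dS < lamS / α) (hdT : dT < lamT / α) :
    (∀ i, 1 ≤ i → i ≤ L → Sstar ⊆ S i ∧ Tstar ⊆ T i) ∧ (S L ∪ T L).Nonempty := by
  have hdense : IsDensestPair R Sstar Tstar := hmax
  have hα0 : 0 < α := by linarith
  rw [lt_div_iff₀' hα0] at hdS hdT
  have hsub := hdec.subset_of_lt_deg
    (fun s hs => hdS.trans_le (hlS ▸ hdense.le_outDeg hTne hs))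
    (fun t ht => hdT.trans_le (hlT ▸ hdense.le_inDeg hSne ht))
  obtain ⟨s, hs⟩ := hSne
  exact ⟨hsub, s, mem_union_left _ ((hsub L hL le_rfl).1 hs)⟩
end

section
/- Consider the level-change potential Ψ on edges: for nodes u, v with levels ℓ(u), ℓ(v) ∈ {1,…,L}, define Ψ(u,v) = 2(L − min(ℓ(u),ℓ(v))) + [ℓ(u)=ℓ(v)]. Suppose node y at level i increases its level to i+1 while all other nodes keep their levels. Then for every neighbor x of y with ℓ(x) ≥ i, the potential Ψ(x,y) strictly decreases (by at least 1), and for every neighbor x with ℓ(x) < i, Ψ(x,y) is unchanged. -/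
open Finset

/-- The edge potential `Ψ(u,v) = 2(L − min(ℓ(u),ℓ(v))) + [ℓ(u)=ℓ(v)]`. -/
def pot {V : Type*} (L : ℕ) (lev : V → ℕ) (u v : V) : ℤ :=
  2 * ((L : ℤ) - ((min (lev u) (lev v) : ℕ) : ℤ)) + (if lev u = lev v then 1 else 0)

/-- When node `y` increases its level from `i` to `i+1`, the potential `Ψ(x,y)` of an
edge to a neighbor `x` with `ℓ(x) ≥ i` drops by at least `1`, and is unchanged if
`ℓ(x) < i`. -/
theorem pot_level_increase {V : Type*} [DecidableEq V] (G : SimpleGraph V) (L : ℕ)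
    (lev : V → ℕ) (hrange : ∀ v, 1 ≤ lev v ∧ lev v ≤ L)
    (y : V) (i : ℕ) (hy : lev y = i)
    (lev' : V → ℕ) (hlev' : lev' = Function.update lev y (i + 1))
    (x : V) (hxy : x ≠ y) (hadj : G.Adj x y) :
    (i ≤ lev x → pot L lev' x y ≤ pot L lev x y - 1) ∧
    (lev x < i → pot L lev' x y = pot L lev x y) := by
  subst hlev'
  have hx : Function.update lev y (i+1) x = lev x := Function.update_of_ne hxy _ _
  have hy' : Function.update lev y (i+1) y = i + 1 := Function.update_self _ _ _
  simp only [pot, hx, hy', hy]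
  constructor
  · intro h
    rcases eq_or_lt_of_le h with h' | h'
    · rw [← h']
      simp [min_eq_left, Nat.min_eq_left (Nat.le_succ i)]
    · rcases Nat.lt_or_ge (lev x) (i+1) with h2 | h2
      · omega
      · have e1 : min (lev x) (i+1) = i+1 := min_eq_right h2
        have e2 : min (lev x) i = i := min_eq_right (by omega)
        rw [e1, e2]
        push_cast
        split_ifs with a b b <;> omega
  · intro h
    have e1 : min (lev x) (i+1) = lev x := min_eq_left (by omega)
    have e2 : min (lev x) i = lev x := min_eq_left (by omega)
    rw [e1, e2]
    split_ifs with a b b <;> omega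
end

section
/- Let 0 < ε < 1, n ≥ 1, α ≥ 1, and suppose π, σ > 0 satisfy α·π < d* < σ/(2(1+ε)), where d* is the maximum subgraph density of an n-node graph G. Define d_k = (1+ε)^{k−1}·π for k ∈ [K] with K ≥ 2 + ⌈log_{1+ε}(σ/π)⌉, and for each k let (Z_1(k),…,Z_L(k)) be an (α, d_k, L)-decomposition with L = 2 + ⌈log_{1+ε} n⌉. Let k' = max{k ∈ [K] : Z_L(k) ≠ ∅}. Then d*/(α(1+ε)) ≤ d_{k'} ≤ 2(1+ε)²·d*. -/
open Finset
open scoped Classical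

variable {V : Type*} [Fintype V] [DecidableEq V]

/-!
A densest subgraph has minimum degree at least `d*`, since deleting one of its vertices cannot
raise the density. Hence if `α d < d*` it is kept at every level and `Z L ≠ ∅`. Conversely,
every node of `Z (i+1)` has degree at least `d` in `Z i`, while the degrees in `Z i` sum to
`2 |E(Z i)| ≤ 2 d* |Z i|`; so if `d > 2 (1+ε) d*` the levels shrink by the factor `1 + ε`, and
`Z L = ∅` once `(1+ε)^(L-1) > n`. The choice of `K` makes `d K` exceed `q > 2 (1+ε) d*`, so
`k' < K`; applying the two facts to `d k'` and to `d (k'+1) = (1+ε) d k'` gives the bounds.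
-/

section Graph

variable (G : SimpleGraph V)

lemma card_filter_mem_edgesIn {S : Finset V} {v : V} (hv : v ∈ S) :
    #{e ∈ edgesIn G S | v ∈ e} = degIn G v S := by
  have himage : {e ∈ edgesIn G S | v ∈ e} = {u ∈ S | G.Adj v u}.image (fun u => s(v, u)) := by
    ext e
    induction e with
    | _ a b =>
      simp only [edgesIn, mem_filter, SimpleGraph.mem_edgeFinset, SimpleGraph.mem_edgeSet,
        Sym2.mem_iff, mem_image, Sym2.eq_iff]
      constructor
      · rintro ⟨⟨hab, hS⟩, rfl | rfl⟩
        · exact ⟨b, ⟨hS b (Or.inr rfl), hab⟩, Or.inl ⟨rfl, rfl⟩⟩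
        · exact ⟨a, ⟨hS a (Or.inl rfl), hab.symm⟩, Or.inr ⟨rfl, rfl⟩⟩
      · rintro ⟨u, ⟨hu, hvu⟩, ⟨rfl, rfl⟩ | ⟨rfl, rfl⟩⟩
        · exact ⟨⟨hvu, by rintro w (rfl | rfl) <;> assumption⟩, Or.inl rfl⟩
        · exact ⟨⟨hvu.symm, by rintro w (rfl | rfl) <;> assumption⟩, Or.inr rfl⟩
  rw [himage, card_image_of_injective _ fun u w h => Sym2.congr_right.mp h, degIn]

lemma card_edgesIn_eq_card_edgesIn_erase_add_degIn {S : Finset V} {v : V} (hv : v ∈ S) :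
    #(edgesIn G S) = #(edgesIn G (S.erase v)) + degIn G v S := by
  have herase : {e ∈ edgesIn G S | v ∉ e} = edgesIn G (S.erase v) := by
    ext e
    simp only [edgesIn, mem_filter, mem_erase]
    constructor
    · rintro ⟨⟨he, heS⟩, hve⟩
      exact ⟨he, fun w hw => ⟨fun h => hve (h ▸ hw), heS w hw⟩⟩
    · rintro ⟨he, heS⟩
      exact ⟨⟨he, fun w hw => (heS w hw).2⟩, fun hve => (heS v hve).1 rfl⟩
  rw [← card_filter_mem_edgesIn G hv, ← herase, add_comm, card_filter_add_card_filter_not]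

end Graph

section Density

variable (G : SimpleGraph V)

def densitySet : Set ℝ := {x | ∃ S : Finset V, S.Nonempty ∧ x = density G S}

variable {G} {dstar : ℝ}

lemma nonneg_of_isGreatest_densitySet (hds : IsGreatest (densitySet G) dstar) : 0 ≤ dstar := by
  obtain ⟨S, -, rfl⟩ := hds.1
  unfold density
  positivity

lemma card_edgesIn_le_of_isGreatest_densitySet (hds : IsGreatest (densitySet G) dstar)
    (S : Finset V) : (#(edgesIn G S) : ℝ) ≤ dstar * #S := by
  rcases S.eq_empty_or_nonempty with rfl | hS
  · simpa [edgesIn] using fun e _ => ⟨_, e.out_fst_mem⟩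
  · have hcard : (0 : ℝ) < #S := by exact_mod_cast hS.card_pos
    rw [← div_le_iff₀ hcard]
    exact hds.2 ⟨S, hS, rfl⟩

lemma le_degIn_of_density_eq (hds : IsGreatest (densitySet G) dstar) {S : Finset V}
    (hS : density G S = dstar) {v : V} (hv : v ∈ S) : dstar ≤ degIn G v S := by
  have hcard : (0 : ℝ) < #S := by exact_mod_cast card_pos.mpr ⟨v, hv⟩
  have hedges : (#(edgesIn G S) : ℝ) = dstar * #S := by
    rw [← hS, density, div_mul_cancel₀ _ hcard.ne']
  have herase := card_edgesIn_le_of_isGreatest_densitySet hds (S.erase v)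
  have hsplit : (#(edgesIn G S) : ℝ) = #(edgesIn G (S.erase v)) + degIn G v S := by
    exact_mod_cast card_edgesIn_eq_card_edgesIn_erase_add_degIn G hv
  rw [card_erase_of_mem hv, Nat.cast_pred (card_pos.mpr ⟨v, hv⟩)] at herase
  linarith

end Density

namespace IsDecomp

variable {G : SimpleGraph V} {α d dstar : ℝ} {L : ℕ} {Z : ℕ → Finset V}

lemma subset_of_forall_lt_degIn (hZ : IsDecomp G α d L Z) {S : Finset V}
    (hS : ∀ v ∈ S, α * d < degIn G v S) : ∀ i, 1 ≤ i → i ≤ L → S ⊆ Z i := by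
  intro i hi
  induction i, hi using Nat.le_induction with
  | base => exact fun _ => hZ.1 ▸ subset_univ S
  | succ i hi ih =>
    intro hiL v hv
    have hSZ := ih (by omega)
    refine hZ.2.2.1 i hi hiL v (hSZ hv) ((hS v hv).trans_le ?_)
    exact_mod_cast card_le_card (filter_subset_filter _ hSZ)

lemma nonempty_of_lt (hZ : IsDecomp G α d L Z) (hds : IsGreatest (densitySet G) dstar)
    (hd : α * d < dstar) (hL : 1 ≤ L) : (Z L).Nonempty := by
  obtain ⟨S, hSne, hSd⟩ := hds.1
  have hdeg : ∀ v ∈ S, α * d < degIn G v S := fun v hv =>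
    hd.trans_le (le_degIn_of_density_eq hds hSd.symm hv)
  exact hSne.mono (hZ.subset_of_forall_lt_degIn hdeg L hL le_rfl)

lemma mul_card_succ_le_s15 (hZ : IsDecomp G α d L Z) (hds : IsGreatest (densitySet G) dstar)
    {i : ℕ} (hi : 1 ≤ i) (hiL : i < L) : d * #(Z (i + 1)) ≤ 2 * dstar * #(Z i) := by
  have hsub := hZ.2.1 i hi hiL
  have hdeg : ∀ v ∈ Z (i + 1), d ≤ degIn G v (Z i) := fun v hv =>
    le_of_not_gt fun hlt => hZ.2.2.2 i hi hiL v (hsub hv) hlt hv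
  calc d * #(Z (i + 1)) ≤ ∑ v ∈ Z (i + 1), (degIn G v (Z i) : ℝ) := by
        rw [mul_comm, ← nsmul_eq_mul, ← sum_const]
        exact sum_le_sum hdeg
    _ ≤ ∑ v ∈ Z i, (degIn G v (Z i) : ℝ) :=
        sum_le_sum_of_subset_of_nonneg hsub fun _ _ _ => Nat.cast_nonneg _
    _ = 2 * #(edgesIn G (Z i)) := by
        exact_mod_cast sum_degIn_eq_two_mul_card_edgesIn G (Z i)
    _ ≤ 2 * dstar * #(Z i) := by
        linarith [card_edgesIn_le_of_isGreatest_densitySet hds (Z i)]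

lemma pow_mul_card_le (hZ : IsDecomp G α d L Z) (hds : IsGreatest (densitySet G) dstar)
    {b : ℝ} (hb : 0 ≤ b) (hd : 2 * b * dstar < d) :
    ∀ j, j < L → b ^ j * #(Z (j + 1)) ≤ Fintype.card V := by
  have hstep : ∀ i, 1 ≤ i → i < L → b * #(Z (i + 1)) ≤ #(Z i) := by
    intro i hi hiL
    have h := hZ.mul_card_succ_le_s15 hds hi hiL
    have hbd : 2 * dstar * (b * #(Z (i + 1))) ≤ d * #(Z (i + 1)) := by
      rw [← mul_assoc, mul_right_comm 2]; gcongr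
    rcases (nonneg_of_isGreatest_densitySet hds).eq_or_lt with rfl | hdstar
    · -- with `d* = 0` the hypothesis `hd` forces `d > 0`, so `Z (i + 1)` is empty
      have hcard : (#(Z (i + 1)) : ℝ) ≤ 0 := by nlinarith
      nlinarith [Nat.cast_nonneg (α := ℝ) #(Z (i + 1)), Nat.cast_nonneg (α := ℝ) #(Z i)]
    · exact le_of_mul_le_mul_left (hbd.trans h) (by positivity)
  intro j
  induction j with
  | zero => simp [hZ.1]
  | succ j ih =>
    intro hjL
    calc b ^ (j + 1) * #(Z (j + 2)) = b ^ j * (b * #(Z (j + 2))) := by ring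
      _ ≤ b ^ j * #(Z (j + 1)) := by gcongr; exact hstep (j + 1) (by omega) hjL
      _ ≤ Fintype.card V := ih (by omega)

lemma eq_empty_of_card_lt_pow (hZ : IsDecomp G α d L Z) (hds : IsGreatest (densitySet G) dstar)
    {b : ℝ} (hb : 0 < b) (hd : 2 * b * dstar < d) (hL : 1 ≤ L)
    (hcard : (Fintype.card V : ℝ) < b ^ (L - 1)) : Z L = ∅ := by
  have h := hZ.pow_mul_card_le hds hb.le hd (L - 1) (by omega)
  rw [Nat.sub_add_cancel hL] at h
  have hlt : (#(Z L) : ℝ) < 1 := by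
    by_contra! hge
    nlinarith [pow_pos hb (L - 1)]
  exact card_eq_zero.mp (by exact_mod_cast Nat.lt_one_iff.mp (by exact_mod_cast hlt))

end IsDecomp

lemma lt_pow_of_two_add_ceil_logb_le {b x : ℝ} {M : ℕ} (hb : 1 < b) (hx : 0 < x)
    (hM : 2 + ⌈Real.logb b x⌉ ≤ (M : ℤ)) : x < b ^ (M - 1) := by
  have hceil : (2 + ⌈Real.logb b x⌉ : ℝ) ≤ M := by exact_mod_cast hM
  have hlog : Real.logb b x < (M : ℝ) - 1 := by linarith [Int.le_ceil (Real.logb b x)]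
  calc x < b ^ ((M : ℝ) - 1) := (Real.logb_lt_iff_lt_rpow hb hx).mp hlog
    _ ≤ b ^ ((M - 1 : ℕ) : ℝ) :=
        Real.rpow_le_rpow_of_exponent_le hb.le (by rcases M with _ | M <;> simp)
    _ = b ^ (M - 1) := Real.rpow_natCast b (M - 1)

theorem decomp_search_approximation_general (G : SimpleGraph V) (α ε p q : ℝ)
    (hα : 1 ≤ α) (hε0 : 0 < ε)
    (hn : 1 ≤ Fintype.card V) (hp : 0 < p) (hq : 0 < q) (dstar : ℝ)
    (hds : IsGreatest {x : ℝ | ∃ S : Finset V, S.Nonempty ∧ x = density G S} dstar)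
    (h2 : dstar < q / (2 * (1 + ε)))
    (K L : ℕ)
    (hK : (2 + ⌈Real.logb (1 + ε) (q / p)⌉ : ℤ) ≤ (K : ℤ))
    (hL : (L : ℤ) = 2 + ⌈Real.logb (1 + ε) (Fintype.card V)⌉)
    (d : ℕ → ℝ) (hd : ∀ k, 1 ≤ k → k ≤ K → d k = (1 + ε) ^ (k - 1) * p)
    (Z : ℕ → ℕ → Finset V)
    (hZ : ∀ k, 1 ≤ k → k ≤ K → IsDecomp G α (d k) L (Z k))
    (k' : ℕ) (hk'1 : 1 ≤ k') (hk'K : k' ≤ K) (hk'ne : Z k' L ≠ ∅)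
    (hk'max : ∀ k, k' < k → k ≤ K → Z k L = ∅) :
    dstar / (α * (1 + ε)) ≤ d k' ∧ d k' ≤ 2 * (1 + ε) ^ 2 * dstar := by
  have hb : 1 < 1 + ε := by linarith
  have hdstar := nonneg_of_isGreatest_densitySet hds
  have hL1 : 1 ≤ L := by
    have := Int.ceil_nonneg (Real.logb_nonneg hb (Nat.one_le_cast.mpr hn))
    omega
  have hempty : ∀ k, 1 ≤ k → k ≤ K → 2 * (1 + ε) * dstar < d k → Z k L = ∅ :=
    fun k hk hkK hdk => (hZ k hk hkK).eq_empty_of_card_lt_pow hds (by positivity) hdk hL1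
      (lt_pow_of_two_add_ceil_logb_le hb (by exact_mod_cast hn) hL.ge)
  have hdK : 2 * (1 + ε) * dstar < d K := by
    have hqp := lt_pow_of_two_add_ceil_logb_le hb (by positivity) hK
    rw [div_lt_iff₀ hp] at hqp
    rw [lt_div_iff₀ (by positivity), mul_comm] at h2
    rw [hd K (hk'1.trans hk'K) le_rfl]
    linarith
  have hk'lt : k' < K := hk'K.lt_of_ne (by rintro rfl; exact hk'ne (hempty k' hk'1 le_rfl hdK))
  have hupper : d k' ≤ 2 * (1 + ε) * dstar :=
    le_of_not_gt fun h => hk'ne (hempty k' hk'1 hk'K h)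
  have hlower : dstar ≤ α * d (k' + 1) := le_of_not_gt fun h =>
    ((hZ (k' + 1) (by omega) hk'lt).nonempty_of_lt hds h hL1).ne_empty
      (hk'max (k' + 1) (Nat.lt_succ_self k') hk'lt)
  have hsucc : d (k' + 1) = (1 + ε) * d k' := by
    rw [hd (k' + 1) (by omega) hk'lt, hd k' hk'1 hk'K, ← mul_assoc, ← pow_succ',
      Nat.add_sub_cancel, Nat.sub_add_cancel hk'1]
  constructor
  · rw [div_le_iff₀ (by positivity)]
    linarith [hsucc ▸ hlower]
  · have : 0 ≤ ε * (1 + ε) * dstar := by positivity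
    linarith

/-- Corollary: the largest `k'` with nonempty topmost level satisfies
`d*/(α(1+ε)) ≤ d_{k'} ≤ 2(1+ε)²·d*`. -/
theorem decomp_search_approximation (G : SimpleGraph V) (α ε p q : ℝ)
    (hα : 1 ≤ α) (hε0 : 0 < ε) (hε1 : ε < 1)
    (hn : 1 ≤ Fintype.card V) (hp : 0 < p) (hq : 0 < q) (dstar : ℝ)
    (hds : IsGreatest {x : ℝ | ∃ S : Finset V, S.Nonempty ∧ x = density G S} dstar)
    (h1 : α * p < dstar) (h2 : dstar < q / (2 * (1 + ε)))
    (K L : ℕ)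
    (hK : (2 + ⌈Real.logb (1 + ε) (q / p)⌉ : ℤ) ≤ (K : ℤ))
    (hL : (L : ℤ) = 2 + ⌈Real.logb (1 + ε) (Fintype.card V)⌉)
    (d : ℕ → ℝ) (hd : ∀ k, 1 ≤ k → k ≤ K → d k = (1 + ε) ^ (k - 1) * p)
    (Z : ℕ → ℕ → Finset V)
    (hZ : ∀ k, 1 ≤ k → k ≤ K → IsDecomp G α (d k) L (Z k))
    (k' : ℕ) (hk'1 : 1 ≤ k') (hk'K : k' ≤ K) (hk'ne : Z k' L ≠ ∅)
    (hk'max : ∀ k, k' < k → k ≤ K → Z k L = ∅) :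
    dstar / (α * (1 + ε)) ≤ d k' ∧ d k' ≤ 2 * (1 + ε) ^ 2 * dstar :=
  decomp_search_approximation_general G α ε p q hα hε0 hn hp hq dstar hds h2 K L hK hL d hd Z hZ k'
    hk'1 hk'K hk'ne hk'max
end
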